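/- arXiv:1310.8559 — 6 statements merged into one kernel-verified Lean document; each statement's English description precedes it below -/
import Mathlib

section
/- Let n ≥ 7 and let Ψ(x) = x³ − (n+3)x² + 3nx − 4. Then Ψ(0) < 0, Ψ(1) > 0, Ψ(3 − 2.5/n) > 0, Ψ(3 − 1/n) < 0, Ψ(n) < 0, and Ψ(n + 1/n) > 0. -/
/-!
Ψ(x) = x (x - 3) (x - n) - 4, so each sign claim compares the product x (x - 3) (x - n) with 4.
At 0 and n the product vanishes and at 1 it is 2 (n - 1). At the four other points, write
u = 1/n ∈ (0, 1/7]; the factor u coming from x - 3 or x - n cancels against n, leaving a polynomial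
in u: (5/2) (3 - 5u/2) (1 - 3u + 5u²/2) at 3 - 5u/2, which decreases in u and exceeds 4 at u = 1/7;
(3 - u) (1 - 3u + u²) = 4 - 1 - u ((u - 3)² + 1) at 3 - u; and (1 + u²) (n - 3 + u) at n + u.
-/

theorem cubic_eq_mul_sub_mul_sub (n x : ℝ) :
    x ^ 3 - (n + 3) * x ^ 2 + 3 * n * x - 4 = x * (x - 3) * (x - n) - 4 := by
  ring

section

variable {n : ℝ}

theorem four_lt_mul_at_three_sub_five_halves_div (hn : 7 ≤ n) :
    4 < (3 - 2.5 / n) * (3 - 2.5 / n - 3) * (3 - 2.5 / n - n) := by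
  set u := 1 / n with hu_def
  have hnu : n * u = 1 := mul_one_div_cancel (by linarith)
  have hu : 0 < u := by positivity
  have hu7 : u ≤ 1 / 7 := one_div_le_one_div_of_le (by norm_num) hn
  have hx : 2.5 / n = 5 / 2 * u := by rw [hu_def]; ring
  have hfirst : 37 / 14 ≤ 3 - 5 / 2 * u := by linarith
  have hsecond : 61 / 98 ≤ 1 - 3 * u + 5 / 2 * u ^ 2 := by nlinarith
  calc (4 : ℝ) < 5 / 2 * (37 / 14) * (61 / 98) := by norm_num
    _ ≤ 5 / 2 * (3 - 5 / 2 * u) * (1 - 3 * u + 5 / 2 * u ^ 2) := by gcongr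
    _ = (3 - 2.5 / n) * (3 - 2.5 / n - 3) * (3 - 2.5 / n - n) := by
      rw [hx]; linear_combination (-5 / 2 * (3 - 5 / 2 * u)) * hnu

theorem mul_at_three_sub_inv_lt_four (hn : 0 < n) :
    (3 - 1 / n) * (3 - 1 / n - 3) * (3 - 1 / n - n) < 4 := by
  set u := 1 / n with hu_def
  have hnu : n * u = 1 := mul_one_div_cancel hn.ne'
  have hu : 0 < u := by positivity
  calc (3 - u) * (3 - u - 3) * (3 - u - n) = 4 - 1 - u * ((u - 3) ^ 2 + 1) := by
        linear_combination (3 - u) * hnu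
    _ < 4 := by nlinarith [mul_pos hu (by positivity : (0 : ℝ) < (u - 3) ^ 2 + 1)]

theorem four_lt_mul_at_add_inv (hn : 7 ≤ n) :
    4 < (n + 1 / n) * (n + 1 / n - 3) * (n + 1 / n - n) := by
  set u := 1 / n with hu_def
  have hnu : n * u = 1 := mul_one_div_cancel (by linarith)
  have hu : 0 < u := by positivity
  calc (4 : ℝ) < n - 3 + u := by linarith
    _ ≤ (1 + u ^ 2) * (n - 3 + u) := le_mul_of_one_le_left (by linarith) (by nlinarith)
    _ = (n + u) * (n + u - 3) * (n + u - n) := by linear_combination (-(n - 3 + u)) * hnu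

end

theorem stmt_0 (n : ℝ) (hn : 7 ≤ n)
    (Ψ : ℝ → ℝ) (hΨ : ∀ x, Ψ x = x ^ 3 - (n + 3) * x ^ 2 + 3 * n * x - 4) :
    Ψ 0 < 0 ∧ Ψ 1 > 0 ∧ Ψ (3 - 2.5 / n) > 0 ∧ Ψ (3 - 1 / n) < 0 ∧
      Ψ n < 0 ∧ Ψ (n + 1 / n) > 0 := by
  simp only [hΨ, cubic_eq_mul_sub_mul_sub, gt_iff_lt, sub_pos, sub_neg]
  refine ⟨by norm_num, by linarith, four_lt_mul_at_three_sub_five_halves_div hn,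
    mul_at_three_sub_inv_lt_four (by linarith), by simp, four_lt_mul_at_add_inv hn⟩
end

section
/- Let n ≥ 7 and Ψ(x) = x³ − (n+3)x² + 3nx − 4. Then Ψ has a root q₂ with 3 − 2.5/n < q₂ < 3 − 1/n and a root q₁ with n < q₁ < n + 1/n. -/
open Set

theorem exists_eq_zero_mem_Ioo_of_mul_neg {f : ℝ → ℝ} {a b : ℝ} (hab : a ≤ b)
    (hf : ContinuousOn f (Icc a b)) (hsign : f a * f b < 0) : ∃ c ∈ Ioo a b, f c = 0 := by
  rcases mul_neg_iff.mp hsign with ⟨hfa, hfb⟩ | ⟨hfa, hfb⟩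
  · exact intermediate_value_Ioo' hab hf ⟨hfb, hfa⟩
  · exact intermediate_value_Ioo hab hf ⟨hfa, hfb⟩

def psi (n x : ℝ) : ℝ := x ^ 3 - (n + 3) * x ^ 2 + 3 * n * x - 4

namespace psi

variable {n : ℝ}

theorem continuous (n : ℝ) : Continuous (psi n) := by
  unfold psi; fun_prop

theorem apply_self (n : ℝ) : psi n n = -4 := by
  unfold psi; ring

theorem apply_three_sub_inv_neg (hn : 0 < n) : psi n (3 - 1 / n) < 0 := by
  have key : psi n (3 - 1 / n) * n ^ 3 = -(n ^ 3) - 10 * n ^ 2 + 6 * n - 1 := by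
    unfold psi; field_simp; ring
  have : -(n ^ 3) - 10 * n ^ 2 + 6 * n - 1 < 0 := by
    nlinarith [pow_pos hn 3, sq_nonneg (n - 0.3)]
  nlinarith [pow_pos hn 3]

theorem apply_three_sub_pos (hn : 7 ≤ n) : 0 < psi n (3 - 2.5 / n) := by
  have hn0 : 0 < n := by linarith
  have key : psi n (3 - 2.5 / n) * n ^ 3
      = 3.5 * n ^ 3 - 28.75 * n ^ 2 + 37.5 * n - 15.625 := by
    unfold psi; field_simp; ring
  have : 0 < 3.5 * n ^ 3 - 28.75 * n ^ 2 + 37.5 * n - 15.625 := by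
    nlinarith [mul_nonneg (sub_nonneg.2 hn) (sq_nonneg (n - 7)),
      mul_nonneg (sub_nonneg.2 hn) (sub_nonneg.2 hn)]
  nlinarith [pow_pos hn0 3]

theorem apply_add_inv_pos (hn : 7 ≤ n) : 0 < psi n (n + 1 / n) := by
  have hn0 : 0 < n := by linarith
  have key : psi n (n + 1 / n) * n ^ 3 = n ^ 4 - 7 * n ^ 3 + 2 * n ^ 2 - 3 * n + 1 := by
    unfold psi; field_simp; ring
  -- `n ^ 3 (n - 7) + (2n - 1)(n - 1)`
  have : 0 < n ^ 4 - 7 * n ^ 3 + 2 * n ^ 2 - 3 * n + 1 := by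
    nlinarith [mul_nonneg (pow_pos hn0 3).le (sub_nonneg.2 hn)]
  nlinarith [pow_pos hn0 3]

end psi

theorem stmt_1 (n : ℝ) (hn : 7 ≤ n)
    (Ψ : ℝ → ℝ) (hΨ : ∀ x, Ψ x = x ^ 3 - (n + 3) * x ^ 2 + 3 * n * x - 4) :
    (∃ q2 : ℝ, Ψ q2 = 0 ∧ 3 - 2.5 / n < q2 ∧ q2 < 3 - 1 / n) ∧
      (∃ q1 : ℝ, Ψ q1 = 0 ∧ n < q1 ∧ q1 < n + 1 / n) := by
  obtain rfl : Ψ = psi n := funext hΨ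
  have hn0 : 0 < n := by linarith
  have hq2 : 3 - 2.5 / n ≤ 3 - 1 / n := by gcongr; norm_num
  have hq1 : n ≤ n + 1 / n := le_add_of_nonneg_right (by positivity)
  constructor
  · obtain ⟨q, ⟨hlo, hhi⟩, hq⟩ := exists_eq_zero_mem_Ioo_of_mul_neg hq2
      (psi.continuous n).continuousOn
      (mul_neg_of_pos_of_neg (psi.apply_three_sub_pos hn) (psi.apply_three_sub_inv_neg hn0))
    exact ⟨q, hq, hlo, hhi⟩
  · obtain ⟨q, ⟨hlo, hhi⟩, hq⟩ := exists_eq_zero_mem_Ioo_of_mul_neg hq1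
      (psi.continuous n).continuousOn
      (by rw [psi.apply_self]; linarith [psi.apply_add_inv_pos hn])
    exact ⟨q, hq, hlo, hhi⟩
end

section
/- Let G = S_n⁺ (the star on n vertices plus one edge) with n ≥ 7. Then e(G) + 3 − 2.5/n < q₁(G) + q₂(G) < e(G) + 3, where q₁, q₂ are the two largest eigenvalues of the signless Laplacian Q(G) = D + A, and e(G) = n is the number of edges. -/
/-- Adjacency relation of `S_n⁺` (0-indexed): the triangle is on vertices
`0,1,2`, the center `2` is adjacent to all vertices `j ≥ 3`. -/
def starPlusAdj (n : ℕ) (i j : Fin n) : Prop :=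
  (i.val < 3 ∧ j.val < 3 ∧ i ≠ j) ∨ (i.val = 2 ∧ 3 ≤ j.val) ∨ (j.val = 2 ∧ 3 ≤ i.val)

instance (n : ℕ) (i j : Fin n) : Decidable (starPlusAdj n i j) := by
  unfold starPlusAdj; infer_instance

/-- Adjacency matrix of `S_n⁺`. -/
def starPlusA (n : ℕ) : Matrix (Fin n) (Fin n) ℝ :=
  Matrix.of fun i j => if starPlusAdj n i j then 1 else 0

/-- Signless Laplacian `Q = D + A` of `S_n⁺`, where `D` is the diagonal
matrix of the row sums (degrees). -/
def starPlusQ (n : ℕ) : Matrix (Fin n) (Fin n) ℝ :=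
  Matrix.diagonal (fun i => ∑ j, starPlusA n i j) + starPlusA n


/-!
Listing the triangle first, the pendant part of `t • 1 - Q` is the block `(t - 1) • 1`, so a
Schur complement gives `det (t • 1 - Q) = (t - 1) ^ (n - 3) * g t` with
`g t = t ^ 3 - (n + 3) * t ^ 2 + 3 * n * t - 4`. The cubic `g` changes sign on `(0, 2.5 / n)`,
`(1, 3)` and `(n - 1, n + 3)`, so the spectrum of `Q` is `1` with multiplicity `n - 3` together
with three simple eigenvalues `r₃ < 1 < r₂ < r₁`. Hence `q₁ + q₂ = r₁ + r₂ = n + 3 - r₃` by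
Vieta, and `0 < r₃ < 2.5 / n`.
-/

open Matrix Polynomial

theorem Matrix.det_fromBlocks_smul_one₂₂ {K m n : Type*} [Field K] [Fintype m] [Fintype n]
    [DecidableEq m] [DecidableEq n] (A : Matrix m m K) (B : Matrix m n K) (C : Matrix n m K)
    {c : K} (hc : c ≠ 0) :
    (fromBlocks A B C (c • 1)).det = c ^ Fintype.card n * (A - c⁻¹ • (B * C)).det := by
  have hinv : (c • 1 : Matrix n n K) * (c⁻¹ • 1) = 1 := by
    rw [smul_mul_smul_comm, mul_inv_cancel₀ hc, one_mul, one_smul]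
  let _ : Invertible (c • 1 : Matrix n n K) := invertibleOfRightInverse _ _ hinv
  rw [det_fromBlocks₂₂, det_smul, det_one, mul_one, invOf_eq_right_inv hinv, Matrix.mul_smul,
    Matrix.mul_one, smul_mul]

theorem add_add_eq_neg_of_cubic_roots {K : Type*} [Field K] {b c d x y z : K}
    (hxy : x ≠ y) (hxz : x ≠ z) (hyz : y ≠ z) (hx : x ^ 3 + b * x ^ 2 + c * x + d = 0)
    (hy : y ^ 3 + b * y ^ 2 + c * y + d = 0) (hz : z ^ 3 + b * z ^ 2 + c * z + d = 0) :
    x + y + z = -b := by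
  have key : (x - y) * (x - z) * (y - z) * (x + y + z + b) = 0 := by
    linear_combination (y - z) * hx - (x - z) * hy + (x - y) * hz
  simpa [sub_eq_zero, hxy, hxz, hyz, add_eq_zero_iff_eq_neg] using key

theorem apply_eq_and_apply_eq_of_top_two {α ι : Type*} [LinearOrder α] [Fintype ι]
    (e : ι → α) {a b : α} {i j : ι} (hij : i ≠ j)
    (ha : (Finset.univ.val.map e).count a = 1) (hb : b ∈ Finset.univ.val.map e) (hba : b < a)
    (hle : ∀ x ∈ Finset.univ.val.map e, x ≠ a → x ≤ b)
    (hmax₁ : ∀ k, e k ≤ e i) (hmax₂ : ∀ k, k ≠ i → e k ≤ e j) : e i = a ∧ e j = b := by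
  have hmem (k : ι) : e k ∈ Finset.univ.val.map e := Multiset.mem_map_of_mem e (Finset.mem_univ k)
  obtain ⟨k, -, hk⟩ := Multiset.mem_map.mp (Multiset.count_pos.mp (ha ▸ Nat.one_pos))
  have hi : e i = a := by
    by_contra h
    exact absurd ((hk ▸ hmax₁ k).trans (hle _ (hmem i) h)) hba.not_ge
  have hj : e j ≠ a := by
    intro h
    have : 1 < (Finset.univ.filter fun k ↦ a = e k).card :=
      Finset.one_lt_card.mpr ⟨i, by simp [hi], j, by simp [h], hij⟩
    rw [Multiset.count_map] at ha
    exact this.ne' (by rwa [Finset.card_def, Finset.filter_val])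
  obtain ⟨k', -, hk'⟩ := Multiset.mem_map.mp hb
  have hk'i : k' ≠ i := by rintro rfl; exact hba.ne (hk' ▸ hi)
  exact ⟨hi, le_antisymm (hle _ (hmem j) hj) (hk' ▸ hmax₂ k' hk'i)⟩

theorem starPlusA_submatrix_finSumFinEquiv (m : ℕ) :
    (starPlusA (3 + m)).submatrix finSumFinEquiv finSumFinEquiv =
      fromBlocks !![0, 1, 1; 1, 0, 1; 1, 1, 0] (of fun a _ => if a = 2 then 1 else 0)
        (of fun _ b => if b = 2 then 1 else 0) 0 := by
  ext (a | a) (b | b)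
  all_goals simp only [starPlusA, starPlusAdj, submatrix_apply, of_apply, fromBlocks_apply₁₁,
    fromBlocks_apply₁₂, fromBlocks_apply₂₁, fromBlocks_apply₂₂, finSumFinEquiv_apply_left,
    finSumFinEquiv_apply_right, Fin.val_castAdd, Fin.val_natAdd, ne_eq, Fin.ext_iff,
    Matrix.zero_apply]
  · fin_cases a <;> fin_cases b <;> simp
  · fin_cases a <;> simp
  · fin_cases b <;> simp
  · simp; omega

theorem starPlusA_sum_finSumFinEquiv (m : ℕ) (x : Fin 3 ⊕ Fin m) :
    ∑ j, starPlusA (3 + m) (finSumFinEquiv x) j =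
      Sum.elim ![2, 2, (m : ℝ) + 2] 1 x := by
  rw [← Equiv.sum_comp finSumFinEquiv]
  change ∑ y, (starPlusA (3 + m)).submatrix finSumFinEquiv finSumFinEquiv x y = _
  rw [starPlusA_submatrix_finSumFinEquiv, Fintype.sum_sum_type]
  rcases x with a | a
  · fin_cases a <;> simp [Fin.sum_univ_three] <;> ring
  · simp

theorem starPlusQ_submatrix_finSumFinEquiv (m : ℕ) :
    (starPlusQ (3 + m)).submatrix finSumFinEquiv finSumFinEquiv =
      fromBlocks !![2, 1, 1; 1, 2, 1; 1, 1, (m : ℝ) + 2] (of fun a _ => if a = 2 then 1 else 0)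
        (of fun _ b => if b = 2 then 1 else 0) 1 := by
  have hA : ∀ x y, starPlusA (3 + m) (finSumFinEquiv x) (finSumFinEquiv y) =
      fromBlocks !![0, 1, 1; 1, 0, 1; 1, 1, 0] (of fun a _ => if a = 2 then (1 : ℝ) else 0)
        (of fun _ b => if b = 2 then 1 else 0) 0 x y := by
    intro x y; rw [← starPlusA_submatrix_finSumFinEquiv]; rfl
  ext (a | a) (b | b) <;>
    simp only [starPlusQ, submatrix_apply, Matrix.add_apply, diagonal_apply, hA,
      starPlusA_sum_finSumFinEquiv, EmbeddingLike.apply_eq_iff_eq]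
  · fin_cases a <;> fin_cases b <;> simp
  · simp
  · simp
  · simp [one_apply]

theorem det_scalar_sub_starPlusQ (m : ℕ) {t : ℝ} (ht : t ≠ 1) :
    (scalar (Fin (3 + m)) t - starPlusQ (3 + m)).det =
      (t - 1) ^ m * (t ^ 3 - (m + 6) * t ^ 2 + 3 * (m + 3) * t - 4) := by
  have hsub : (scalar (Fin (3 + m)) t - starPlusQ (3 + m)).submatrix finSumFinEquiv finSumFinEquiv
      = scalar _ t - (starPlusQ (3 + m)).submatrix finSumFinEquiv finSumFinEquiv := by
    ext x y; simp [diagonal_apply]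
  rw [← det_submatrix_equiv_self finSumFinEquiv, hsub, starPlusQ_submatrix_finSumFinEquiv]
  have hblocks : scalar (Fin 3 ⊕ Fin m) t - fromBlocks !![2, 1, 1; 1, 2, 1; 1, 1, (m : ℝ) + 2]
      (of fun a _ => if a = 2 then 1 else 0) (of fun _ b => if b = 2 then 1 else 0) 1 =
      fromBlocks !![t - 2, -1, -1; -1, t - 2, -1; -1, -1, t - (m + 2)]
        (of fun a _ => if a = 2 then -1 else 0) (of fun _ b => if b = 2 then -1 else 0)
        ((t - 1) • 1) := by
    ext (a | a) (b | b)
    · fin_cases a <;> fin_cases b <;> simp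
    · simp; split_ifs <;> simp
    · simp; split_ifs <;> simp
    · simp [diagonal_apply, one_apply]; split_ifs <;> simp
  rw [hblocks, det_fromBlocks_smul_one₂₂ _ _ _ (sub_ne_zero.mpr ht), Fintype.card_fin]
  congr 1
  rw [det_fin_three]
  simp [Matrix.mul_apply]
  field_simp
  ring

theorem exists_roots_starPlusCubic {N : ℝ} (hN : 7 ≤ N) :
    ∃ r₁ r₂ r₃ : ℝ,
      (X ^ 3 - C (N + 3) * X ^ 2 + C (3 * N) * X - C 4 : ℝ[X]).roots = {r₁, r₂, r₃} ∧
      r₁ + r₂ + r₃ = N + 3 ∧ r₃ < 1 ∧ 1 < r₂ ∧ r₂ < r₁ ∧ 0 < r₃ ∧ r₃ < 2.5 / N := by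
  set p : ℝ[X] := X ^ 3 - C (N + 3) * X ^ 2 + C (3 * N) * X - C 4 with hp
  have hp_eval (t : ℝ) : p.eval t = t ^ 3 - (N + 3) * t ^ 2 + 3 * N * t - 4 := by simp [hp]
  have hN0 : 0 < N := by linarith
  obtain ⟨r₃, ⟨hr₃0, hr₃b⟩, hr₃⟩ : ∃ r ∈ Set.Ioo 0 (2.5 / N), p.eval r = 0 := by
    have hb : 0 < 2.5 / N := by positivity
    have hbN : 2.5 / N * N = 2.5 := div_mul_cancel₀ _ hN0.ne'
    refine intermediate_value_Ioo hb.le p.continuous.continuousOn ⟨?_, ?_⟩ <;> simp only [hp_eval]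
    · norm_num
    · nlinarith [mul_le_mul_of_nonneg_left hN hb.le]
  obtain ⟨r₂, ⟨hr₂1, hr₂3⟩, hr₂⟩ : ∃ r ∈ Set.Ioo 1 3, p.eval r = 0 := by
    refine intermediate_value_Ioo' (by norm_num) p.continuous.continuousOn ⟨?_, ?_⟩ <;>
      simp only [hp_eval] <;> nlinarith
  obtain ⟨r₁, ⟨hr₁N, -⟩, hr₁⟩ : ∃ r ∈ Set.Ioo (N - 1) (N + 3), p.eval r = 0 := by
    refine intermediate_value_Ioo (by linarith) p.continuous.continuousOn ⟨?_, ?_⟩ <;>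
      simp only [hp_eval] <;> nlinarith
  have hr₃1 : r₃ < 1 := hr₃b.trans (by rw [div_lt_one hN0]; linarith)
  have h₁₂ : r₁ ≠ r₂ := by intro h; linarith
  have h₁₃ : r₁ ≠ r₃ := by intro h; linarith
  have h₂₃ : r₂ ≠ r₃ := by intro h; linarith
  refine ⟨r₁, r₂, r₃, ?_, ?_, hr₃1, hr₂1, by linarith, hr₃0, hr₃b⟩
  · have hdeg : p.degree = 3 := by rw [hp]; compute_degree!
    have := roots_eq_of_degree_eq_card (p := p) (S := {r₁, r₂, r₃}) (by simp [hr₁, hr₂, hr₃])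
      (by rw [hdeg, Finset.card_insert_of_notMem (by simp [h₁₂, h₁₃]),
        Finset.card_pair h₂₃]; rfl)
    simpa [h₁₂, h₁₃, h₂₃] using this
  · rw [hp_eval] at hr₁ hr₂ hr₃
    linear_combination add_add_eq_neg_of_cubic_roots (b := -(N + 3)) (c := 3 * N) (d := -4)
      h₁₂ h₁₃ h₂₃ (by linear_combination hr₁) (by linear_combination hr₂) (by linear_combination hr₃)

theorem charpoly_starPlusQ {n : ℕ} (hn : 3 ≤ n) :
    (starPlusQ n).charpoly =
      (X - 1) ^ (n - 3) * (X ^ 3 - C ((n : ℝ) + 3) * X ^ 2 + C (3 * (n : ℝ)) * X - C 4) := by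
  obtain ⟨m, rfl⟩ : ∃ m, n = 3 + m := ⟨n - 3, by omega⟩
  refine eq_of_infinite_eval_eq _ _ ((Set.finite_singleton 1).infinite_compl.mono fun t ht ↦ ?_)
  simp only [Set.mem_ofPred_eq, eval_charpoly, det_scalar_sub_starPlusQ m ht, eval_mul, eval_pow,
    eval_sub, eval_add, eval_X, eval_one, eval_C, Nat.add_sub_cancel_left]
  push_cast
  ring

theorem map_eigenvalues_starPlusQ {n : ℕ} (hn : 3 ≤ n) (hQ : (starPlusQ n).IsHermitian)
    {r₁ r₂ r₃ : ℝ}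
    (hroots : (X ^ 3 - C ((n : ℝ) + 3) * X ^ 2 + C (3 * (n : ℝ)) * X - C 4).roots = {r₁, r₂, r₃}) :
    Finset.univ.val.map hQ.eigenvalues = Multiset.replicate (n - 3) 1 + {r₁, r₂, r₃} := by
  have hne := (starPlusQ n).charpoly_monic.ne_zero
  have h := hQ.roots_charpoly_eq_eigenvalues
  rw [charpoly_starPlusQ hn] at h hne
  rw [roots_mul hne, roots_pow, ← C_1, roots_X_sub_C, hroots] at h
  simpa only [RCLike.ofReal_real_eq_id, Function.id_comp, Multiset.nsmul_singleton] using h.symm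

theorem stmt_3 (n : ℕ) (hn : 7 ≤ n)
    (hQ : (starPlusQ n).IsHermitian) (q1 q2 : ℝ) (i j : Fin n) (hij : i ≠ j)
    (hq1 : hQ.eigenvalues i = q1) (hq2 : hQ.eigenvalues j = q2)
    (hmax1 : ∀ k, hQ.eigenvalues k ≤ q1)
    (hmax2 : ∀ k, k ≠ i → hQ.eigenvalues k ≤ q2) :
    (n : ℝ) + 3 - 2.5 / n < q1 + q2 ∧ q1 + q2 < (n : ℝ) + 3 := by
  subst hq1 hq2
  obtain ⟨r₁, r₂, r₃, hroots, hsum, hr₃1, hr₂1, hr₂₁, hr₃0, hr₃b⟩ :=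
    exists_roots_starPlusCubic (N := n) (by exact_mod_cast hn)
  have hspec := map_eigenvalues_starPlusQ (by omega) hQ hroots
  obtain ⟨rfl, rfl⟩ := apply_eq_and_apply_eq_of_top_two hQ.eigenvalues (a := r₁) (b := r₂) hij
    (by simp [hspec, Multiset.count_replicate, (hr₂1.trans hr₂₁).ne, hr₂₁.ne',
      (hr₃1.trans (hr₂1.trans hr₂₁)).ne'])
    (by simp [hspec]) hr₂₁
    (by
      simp only [hspec, Multiset.mem_add, Multiset.mem_replicate, Multiset.insert_eq_cons,
        Multiset.mem_cons, Multiset.mem_singleton]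
      rintro x (⟨-, rfl⟩ | rfl | rfl | rfl) hx <;> first | exact absurd rfl hx | linarith)
    hmax1 hmax2
  constructor <;> linarith
end

section
/- Let n ≥ 9 and Ψ(x) = x⁵ − (n+5)x⁴ + (6n+4)x³ − (10n−2)x² + (3n+12)x − 4. Then Ψ has a root in each of the intervals (3 − 0.8/ln n, 3 − 5/(4n)) and (n−1, n−1 + 5/(4n)). -/
/-!
All four sign conditions reduce, after clearing denominators, to polynomial inequalities.
At `3 - 5/(4n)`, `n - 1` and `n - 1 + 5/(4n)` these are polynomials in `n` alone, settled by
expanding around `n = 9`. At `3 - 0.8/L` with `L = log n` one gets `n L q(L) - r(L)` with `q > 0`;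
the transcendental relation between `n` and `L` is replaced by the polynomial bound
`(1 + L/4)^4 ≤ exp L = n`, together with `L ≥ log 9 > 2.15`.
-/

open Real

def quintic (n x : ℝ) : ℝ :=
  x ^ 5 - (n + 5) * x ^ 4 + (6 * n + 4) * x ^ 3 - (10 * n - 2) * x ^ 2 + (3 * n + 12) * x - 4

lemma continuous_quintic (n : ℝ) : Continuous (quintic n) := by
  unfold quintic; fun_prop

lemma two_point_one_five_lt_log_nine : (2.15 : ℝ) < log 9 := by
  have h_exp_small : exp 0.15 < 20 / 17 := by
    have := exp_bound_div_one_sub_of_interval' (x := 0.15) (by norm_num) (by norm_num)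
    norm_num at this ⊢
    linarith
  have h_exp : exp 2.15 < 9 := by
    have h_split : exp 2.15 = exp 1 * exp 1 * exp 0.15 := by
      rw [← exp_add, ← exp_add]; norm_num
    calc exp 2.15 = exp 1 * exp 1 * exp 0.15 := h_split
      _ < 2.7182818286 * 2.7182818286 * (20 / 17) := by gcongr <;> exact exp_one_lt_d9
      _ < 9 := by norm_num
  exact (lt_log_iff_exp_lt (by norm_num)).2 h_exp

lemma one_add_log_div_pow_le {x : ℝ} (hx : 0 < x) {k : ℕ} (hk : k ≠ 0)
    (h : 0 ≤ 1 + log x / k) : (1 + log x / k) ^ k ≤ x :=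
  calc (1 + log x / k) ^ k ≤ exp (log x / k) ^ k := by
        gcongr; linarith [add_one_le_exp (log x / k)]
    _ = x := by rw [← exp_nat_mul, mul_div_cancel₀ _ (by exact_mod_cast hk), exp_log hx]

lemma quintic_sub_one (n : ℝ) : quintic n (n - 1) = -(5 * n ^ 2 - 25 * n + 24) := by
  unfold quintic; ring

lemma quintic_three_sub_div_mul {n : ℝ} (hn : n ≠ 0) :
    quintic n (3 - 5 / (4 * n)) * (1024 * n ^ 5) =
      -256 * n ^ 5 - 12160 * n ^ 4 + 72800 * n ^ 3 - 70500 * n ^ 2 + 25000 * n - 3125 := by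
  unfold quintic; field_simp; ring

lemma quintic_sub_one_add_div_mul {n : ℝ} (hn : n ≠ 0) :
    quintic n (n - 1 + 5 / (4 * n)) * (1024 * n ^ 5) =
      1280 * n ^ 8 - 17920 * n ^ 7 + 75520 * n ^ 6 - 142976 * n ^ 5 + 178400 * n ^ 4
        - 140000 * n ^ 3 + 78000 * n ^ 2 - 25000 * n + 3125 := by
  unfold quintic; field_simp; ring

lemma quintic_three_sub_eight_tenths_div_mul (n : ℝ) {L : ℝ} (hL : L ≠ 0) :
    quintic n (3 - 0.8 / L) * (3125 * L ^ 5) =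
      n * L * (7500 * L ^ 3 - 20000 * L ^ 2 + 9600 * L - 1280)
        - (12500 * L ^ 5 - 7500 * L ^ 4 - 76000 * L ^ 3 + 54400 * L ^ 2 - 12800 * L + 1024) := by
  unfold quintic; field_simp; ring

lemma quintic_sub_one_neg {n : ℝ} (hn : 9 ≤ n) : quintic n (n - 1) < 0 := by
  rw [quintic_sub_one]; nlinarith

lemma quintic_three_sub_div_neg {n : ℝ} (hn : 9 ≤ n) : quintic n (3 - 5 / (4 * n)) < 0 := by
  have hn5 : 0 < 1024 * n ^ 5 := by positivity
  have ht : 0 ≤ n - 9 := by linarith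
  have h_cleared := quintic_three_sub_div_mul (n := n) (by positivity)
  have h_neg : quintic n (3 - 5 / (4 * n)) * (1024 * n ^ 5) < 0 := by
    rw [h_cleared]
    nlinarith [pow_nonneg ht 2, pow_nonneg ht 3, pow_nonneg ht 4, pow_nonneg ht 5]
  exact neg_of_mul_neg_left h_neg hn5.le

lemma quintic_sub_one_add_div_pos {n : ℝ} (hn : 9 ≤ n) :
    0 < quintic n (n - 1 + 5 / (4 * n)) := by
  have hn5 : 0 < 1024 * n ^ 5 := by positivity
  have ht : 0 ≤ n - 9 := by linarith
  have h_cleared := quintic_sub_one_add_div_mul (n := n) (by positivity)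
  have h_pos : 0 < quintic n (n - 1 + 5 / (4 * n)) * (1024 * n ^ 5) := by
    rw [h_cleared]
    nlinarith [pow_nonneg ht 2, pow_nonneg ht 3, pow_nonneg ht 4, pow_nonneg ht 5,
      pow_nonneg ht 6, pow_nonneg ht 7, pow_nonneg ht 8]
  exact pos_of_mul_pos_left h_pos hn5.le

lemma cleared_quintic_three_sub_eight_tenths_div_pos {n L : ℝ} (hL : 2.15 ≤ L)
    (hn : (1 + L / 4) ^ 4 ≤ n) :
    0 < n * L * (7500 * L ^ 3 - 20000 * L ^ 2 + 9600 * L - 1280)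
        - (12500 * L ^ 5 - 7500 * L ^ 4 - 76000 * L ^ 3 + 54400 * L ^ 2 - 12800 * L + 1024) := by
  have hu : 0 ≤ L - 2.15 := by linarith
  have hq : 0 < L * (7500 * L ^ 3 - 20000 * L ^ 2 + 9600 * L - 1280) := by
    nlinarith [pow_nonneg hu 2, pow_nonneg hu 3, pow_nonneg hu 4]
  have h_mono := mul_le_mul_of_nonneg_right hn hq.le
  nlinarith [pow_nonneg hu 2, pow_nonneg hu 3, pow_nonneg hu 4,
    pow_nonneg hu 5, pow_nonneg hu 6, pow_nonneg hu 7, pow_nonneg hu 8]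

lemma log_bounds_of_nine_le {n : ℝ} (hn : 9 ≤ n) :
    2.15 < log n ∧ (1 + log n / 4) ^ 4 ≤ n := by
  have hL : 2.15 < log n :=
    two_point_one_five_lt_log_nine.trans_le (log_le_log (by norm_num) hn)
  refine ⟨hL, ?_⟩
  simpa using one_add_log_div_pow_le (x := n) (k := 4) (by linarith) (by norm_num)
    (by push_cast; linarith)

lemma quintic_three_sub_div_log_pos {n : ℝ} (hn : 9 ≤ n) : 0 < quintic n (3 - 0.8 / log n) := by
  obtain ⟨hL, h_pow⟩ := log_bounds_of_nine_le hn
  have hL5 : 0 < 3125 * log n ^ 5 := by positivity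
  have h_pos : 0 < quintic n (3 - 0.8 / log n) * (3125 * log n ^ 5) := by
    rw [quintic_three_sub_eight_tenths_div_mul n (by positivity)]
    exact cleared_quintic_three_sub_eight_tenths_div_pos hL.le h_pow
  exact pos_of_mul_pos_left h_pos hL5.le

lemma three_sub_div_log_lt {n : ℝ} (hn : 9 ≤ n) : 3 - 0.8 / log n < 3 - 5 / (4 * n) := by
  obtain ⟨hL, h_pow⟩ := log_bounds_of_nine_le hn
  have h_lt : 5 / (4 * n) < 0.8 / log n := by
    rw [div_lt_div_iff₀ (by linarith) (by linarith)]
    nlinarith [sq_nonneg (log n), sq_nonneg (log n - 4)]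
  linarith

theorem stmt_6 (n : ℝ) (hn : 9 ≤ n)
    (Ψ : ℝ → ℝ)
    (hΨ : ∀ x, Ψ x = x ^ 5 - (n + 5) * x ^ 4 + (6 * n + 4) * x ^ 3
      - (10 * n - 2) * x ^ 2 + (3 * n + 12) * x - 4) :
    (∃ x : ℝ, Ψ x = 0 ∧ 3 - 0.8 / Real.log n < x ∧ x < 3 - 5 / (4 * n)) ∧
      (∃ x : ℝ, Ψ x = 0 ∧ n - 1 < x ∧ x < n - 1 + 5 / (4 * n)) := by
  obtain rfl : Ψ = quintic n := funext hΨ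
  have h_gap : n - 1 < n - 1 + 5 / (4 * n) := lt_add_of_pos_right _ (by positivity)
  constructor
  · obtain ⟨x, hx, hfx⟩ := intermediate_value_Ioo' (three_sub_div_log_lt hn).le
      (continuous_quintic n).continuousOn
      ⟨quintic_three_sub_div_neg hn, quintic_three_sub_div_log_pos hn⟩
    exact ⟨x, hfx, hx⟩
  · obtain ⟨x, hx, hfx⟩ := intermediate_value_Ioo h_gap.le (continuous_quintic n).continuousOn
      ⟨quintic_sub_one_neg hn, quintic_sub_one_add_div_pos hn⟩
    exact ⟨x, hfx, hx⟩
end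

section
/- Let F_{r,s,0} with r ≥ 2 and 2r + s + 1 ≥ 6. Then the largest signless Laplacian eigenvalue q₁ of F_{r,s,0} satisfies 2r + s + 1 < q₁ < 2r + s + 3/2. -/
/-
Write `n = 2r + s + 1`. Lower bound: the test vector `v = (2r + s, 1, …, 1)` (center first)
satisfies `Q v = n v + 2 𝟙_triangles`, so its Rayleigh quotient is `n + 4r / (v ⬝ v) > n`.
Upper bound: a weighted Gershgorin (Collatz–Wielandt) argument. If a nonnegative matrix and a
positive weight vector `x` satisfy `(Q x)_i < c x_i` for all `i`, every eigenvalue has modulus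
`< c`: look at a coordinate maximising `|v_i| / x_i`. The weight `x = ((10n - 19)/12, 1, …, 1)`
works for `c = n + 1/2` as soon as `n ≥ 6`.
-/
/-- Vertices of the firefly graph `F_{r,s,t}`: a center, `r` triangles
(two extra vertices each), `s` pendant vertices, and `t` pendant paths of
length 2 (two vertices each, the first one attached to the center). -/
abbrev FireflyV (r s t : ℕ) : Type := Unit ⊕ (Fin r × Fin 2) ⊕ Fin s ⊕ (Fin t × Fin 2)

/-- Adjacency of the firefly graph `F_{r,s,t}`. -/
def fireflyAdj {r s t : ℕ} : FireflyV r s t → FireflyV r s t → Bool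
  | .inl _, .inr (.inl _) => true
  | .inr (.inl _), .inl _ => true
  | .inl _, .inr (.inr (.inl _)) => true
  | .inr (.inr (.inl _)), .inl _ => true
  | .inl _, .inr (.inr (.inr (_, k))) => k == 0
  | .inr (.inr (.inr (_, k))), .inl _ => k == 0
  | .inr (.inl (i, a)), .inr (.inl (j, b)) => i == j && a != b
  | .inr (.inr (.inr (i, a))), .inr (.inr (.inr (j, b))) => i == j && a != b
  | _, _ => false

/-- Adjacency matrix of `F_{r,s,t}`. -/
def fireflyA (r s t : ℕ) : Matrix (FireflyV r s t) (FireflyV r s t) ℝ :=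
  Matrix.of fun i j => if fireflyAdj i j then 1 else 0

/-- Signless Laplacian `Q = D + A` of `F_{r,s,t}`, where `D` is the diagonal
matrix of the row sums (degrees). -/
def fireflyQ (r s t : ℕ) : Matrix (FireflyV r s t) (FireflyV r s t) ℝ :=
  Matrix.diagonal (fun i => ∑ j, fireflyA r s t i j) + fireflyA r s t

open Matrix

theorem Matrix.IsHermitian.dotProduct_mulVec_le {n : Type*} [Fintype n] [DecidableEq n]
    {A : Matrix n n ℝ} (hA : A.IsHermitian) {q : ℝ} (hq : ∀ k, hA.eigenvalues k ≤ q)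
    (v : n → ℝ) : v ⬝ᵥ A *ᵥ v ≤ q * (v ⬝ᵥ v) := by
  set b := hA.eigenvectorBasis
  have parseval (w : n → ℝ) : v ⬝ᵥ w = ∑ k, (v ⬝ᵥ b k) * (b k ⬝ᵥ w) := by
    simpa [EuclideanSpace.inner_eq_star_dotProduct, dotProduct_comm] using
      (b.sum_inner_mul_inner (WithLp.toLp 2 v) (WithLp.toLp 2 w)).symm
  have coeff (k : n) : b k ⬝ᵥ A *ᵥ v = hA.eigenvalues k * (v ⬝ᵥ b k) := by
    have hsymm : Aᵀ = A := by simpa [conjTranspose_eq_transpose_of_trivial] using hA.eq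
    rw [dotProduct_mulVec, ← mulVec_transpose, hsymm, hA.mulVec_eigenvectorBasis,
      smul_dotProduct, dotProduct_comm, smul_eq_mul]
  rw [parseval, parseval v]
  simp_rw [coeff, Finset.mul_sum]
  refine Finset.sum_le_sum fun k _ => ?_
  rw [dotProduct_comm (b k) v, ← mul_assoc, mul_comm _ (hA.eigenvalues k), mul_assoc]
  exact mul_le_mul_of_nonneg_right (hq k) (mul_self_nonneg _)

theorem Matrix.abs_lt_of_mulVec_eq_smul_of_mulVec_lt {n : Type*} [Fintype n]
    {A : Matrix n n ℝ} (hA : ∀ i j, 0 ≤ A i j) {q : ℝ} {v : n → ℝ} (hv : v ≠ 0)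
    (hev : A *ᵥ v = q • v) {x : n → ℝ} (hx : ∀ i, 0 < x i) {c : ℝ}
    (hc : ∀ i, (A *ᵥ x) i < c * x i) : |q| < c := by
  obtain ⟨j₀, hj₀⟩ := Function.ne_iff.mp hv
  obtain ⟨i, -, hi⟩ := Finset.exists_max_image Finset.univ (fun j => |v j| / x j)
    ⟨j₀, Finset.mem_univ _⟩
  set M := |v i| / x i
  have hvM (j : n) : |v j| ≤ M * x j := (div_le_iff₀ (hx j)).mp (hi j (Finset.mem_univ j))
  have hM : 0 < M := (div_pos (abs_pos.mpr hj₀) (hx j₀)).trans_le (hi j₀ (Finset.mem_univ _))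
  have hvi : |v i| = M * x i := (div_mul_cancel₀ _ (hx i).ne').symm
  have key : |q| * (M * x i) < c * (M * x i) :=
    calc |q| * (M * x i) = |(A *ᵥ v) i| := by rw [hev, Pi.smul_apply, smul_eq_mul, abs_mul, hvi]
      _ ≤ ∑ j, |A i j * v j| := Finset.abs_sum_le_sum_abs _ _
      _ = ∑ j, A i j * |v j| := by simp_rw [abs_mul, abs_of_nonneg (hA i _)]
      _ ≤ ∑ j, A i j * (M * x j) :=
          Finset.sum_le_sum fun j _ => mul_le_mul_of_nonneg_left (hvM j) (hA i j)
      _ = M * (A *ᵥ x) i := by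
          rw [mulVec, dotProduct, Finset.mul_sum]
          exact Finset.sum_congr rfl fun j _ => by ring
      _ < M * (c * x i) := mul_lt_mul_of_pos_left (hc i) hM
      _ = c * (M * x i) := by ring
  exact lt_of_mul_lt_mul_right key (mul_pos hM (hx i)).le

namespace Firefly

variable {r s : ℕ}

def twoLevel (a b : ℝ) : FireflyV r s 0 → ℝ := Sum.elim (fun _ => a) (fun _ => b)

theorem twoLevel_pos {a b : ℝ} (ha : 0 < a) (hb : 0 < b) (i : FireflyV r s 0) :
    0 < twoLevel a b i := by
  cases i
  exacts [ha, hb]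

theorem fireflyQ_nonneg (i j : FireflyV r s 0) : 0 ≤ fireflyQ r s 0 i j := by
  have hA (i j : FireflyV r s 0) : 0 ≤ fireflyA r s 0 i j := by
    rw [fireflyA, of_apply]; split_ifs <;> norm_num
  unfold fireflyQ
  rw [Matrix.add_apply, diagonal_apply]
  split_ifs
  · exact add_nonneg (Finset.sum_nonneg fun k _ => hA i k) (hA i j)
  · simpa using hA i j

variable (a b : ℝ)

theorem fireflyA_mulVec_center :
    (fireflyA r s 0 *ᵥ twoLevel a b) (.inl ()) = (2 * r + s) * b := by
  simp [mulVec, dotProduct, fireflyA, fireflyAdj, twoLevel, Fintype.sum_sum_type]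
  ring

theorem fireflyA_mulVec_triangle (p : Fin r × Fin 2) :
    (fireflyA r s 0 *ᵥ twoLevel a b) (.inr (.inl p)) = a + b := by
  obtain ⟨i, c⟩ := p
  fin_cases c <;> simp [mulVec, dotProduct, fireflyA, fireflyAdj, twoLevel, Fintype.sum_sum_type,
    Fintype.sum_prod_type, Fin.sum_univ_two]

theorem fireflyA_mulVec_pendant (k : Fin s) :
    (fireflyA r s 0 *ᵥ twoLevel a b) (.inr (.inr (.inl k))) = a := by
  simp [mulVec, dotProduct, fireflyA, fireflyAdj, twoLevel, Fintype.sum_sum_type]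

theorem fireflyQ_mulVec_apply (x : FireflyV r s 0 → ℝ) (i : FireflyV r s 0) :
    (fireflyQ r s 0 *ᵥ x) i =
      (fireflyA r s 0 *ᵥ twoLevel 1 1) i * x i + (fireflyA r s 0 *ᵥ x) i := by
  have hdeg : twoLevel (r := r) (s := s) 1 1 = fun _ => 1 := by
    funext j; cases j <;> rfl
  rw [fireflyQ, add_mulVec, Pi.add_apply, mulVec_diagonal, hdeg]
  simp [mulVec, dotProduct]

theorem fireflyQ_mulVec_center :
    (fireflyQ r s 0 *ᵥ twoLevel a b) (.inl ()) = (2 * r + s) * (a + b) := by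
  rw [fireflyQ_mulVec_apply, fireflyA_mulVec_center, fireflyA_mulVec_center]
  simp only [twoLevel, Sum.elim_inl]; ring

theorem fireflyQ_mulVec_triangle (p : Fin r × Fin 2) :
    (fireflyQ r s 0 *ᵥ twoLevel a b) (.inr (.inl p)) = a + 3 * b := by
  rw [fireflyQ_mulVec_apply, fireflyA_mulVec_triangle, fireflyA_mulVec_triangle]
  simp only [twoLevel, Sum.elim_inr]; ring

theorem fireflyQ_mulVec_pendant (k : Fin s) :
    (fireflyQ r s 0 *ᵥ twoLevel a b) (.inr (.inr (.inl k))) = a + b := by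
  rw [fireflyQ_mulVec_apply, fireflyA_mulVec_pendant, fireflyA_mulVec_pendant]
  simp only [twoLevel, Sum.elim_inr]; ring

theorem twoLevel_dotProduct (w : FireflyV r s 0 → ℝ) :
    twoLevel a b ⬝ᵥ w = a * w (.inl ()) + b * ∑ p, w (.inr (.inl p))
      + b * ∑ k, w (.inr (.inr (.inl k))) := by
  simp [dotProduct, twoLevel, Fintype.sum_sum_type, Finset.mul_sum, add_assoc]

theorem twoLevel_dotProduct_fireflyQ_mulVec :
    twoLevel (2 * r + s) 1 ⬝ᵥ fireflyQ r s 0 *ᵥ twoLevel (2 * r + s) 1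
      = (2 * r + s + 1) * (twoLevel (2 * r + s) 1 ⬝ᵥ twoLevel (r := r) (s := s) (2 * r + s) 1)
        + 4 * r := by
  rw [twoLevel_dotProduct, twoLevel_dotProduct]
  simp only [fireflyQ_mulVec_center, fireflyQ_mulVec_triangle, fireflyQ_mulVec_pendant]
  simp only [twoLevel, Sum.elim_inl, Sum.elim_inr, Finset.sum_const, Finset.card_univ,
    Fintype.card_prod, Fintype.card_fin, nsmul_eq_mul]
  push_cast
  ring

/-- The center weight is the midpoint of the interval `(2(n-1)/3, n - 5/2)` to which the
center, triangle and pendant rows confine it; the interval is nonempty exactly when `n > 11/2`. -/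
theorem fireflyQ_mulVec_twoLevel_lt {n : ℝ} (hn : n = 2 * r + s + 1) (hn6 : 6 ≤ n)
    (i : FireflyV r s 0) :
    (fireflyQ r s 0 *ᵥ twoLevel ((10 * n - 19) / 12) 1) i
      < (n + 1 / 2) * twoLevel ((10 * n - 19) / 12) 1 i := by
  rcases i with _ | p | k | ⟨⟨_, h⟩, _⟩
  · rw [fireflyQ_mulVec_center]; simp only [twoLevel, Sum.elim_inl]; nlinarith
  · rw [fireflyQ_mulVec_triangle]; simp only [twoLevel, Sum.elim_inr]; nlinarith
  · rw [fireflyQ_mulVec_pendant]; simp only [twoLevel, Sum.elim_inr]; nlinarith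
  · exact absurd h (Nat.not_lt_zero _)

end Firefly

open Firefly

theorem stmt_12 (r s : ℕ) (hr : 2 ≤ r) (hn : 6 ≤ 2 * r + s + 1)
    (hQ : (fireflyQ r s 0).IsHermitian) (q1 : ℝ) (i : FireflyV r s 0)
    (hq1 : hQ.eigenvalues i = q1)
    (hmax : ∀ k, hQ.eigenvalues k ≤ q1) :
    2 * (r : ℝ) + s + 1 < q1 ∧ q1 < 2 * (r : ℝ) + s + 3 / 2 := by
  have lower : 2 * (r : ℝ) + s + 1 < q1 := by
    set v : FireflyV r s 0 → ℝ := twoLevel (2 * r + s) 1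
    have hray := hQ.dotProduct_mulVec_le hmax v
    rw [twoLevel_dotProduct_fireflyQ_mulVec] at hray
    have hr0 : (0 : ℝ) < r := by exact_mod_cast (by omega : 0 < r)
    have hvv : 0 ≤ v ⬝ᵥ v := by simpa using dotProduct_self_star_nonneg v
    nlinarith
  have hn6 : (6 : ℝ) ≤ 2 * r + s + 1 := by exact_mod_cast hn
  have upper : |q1| < 2 * (r : ℝ) + s + 1 + 1 / 2 :=
    abs_lt_of_mulVec_eq_smul_of_mulVec_lt fireflyQ_nonneg
      (hQ.eigenvectorBasis.orthonormal.ne_zero i ∘ congrArg (WithLp.toLp 2))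
      (hq1 ▸ hQ.mulVec_eigenvectorBasis i) (twoLevel_pos (by linarith) one_pos)
      (fireflyQ_mulVec_twoLevel_lt rfl hn6)
  exact ⟨lower, by linarith [le_abs_self q1]⟩
end

section
/- Let f(G) = e(G) + 3 − (q₁(G) + q₂(G)) for the signless Laplacian Q(G). Then f(F_{1,n−3,0}) → 0 as n → ∞; more precisely, 0 < f(F_{1,n−3,0}) < 2.5/n for all n ≥ 7. -/
/-!
Split the vertices of `S_n⁺` into the classes `{0, 1}`, `{2}` and the pendant vertices. Then
`Q - I` is obtained from a `3 × 3` matrix by repeating rows and columns along the classes, so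
all but three eigenvalues of `Q` equal `1`. Comparing `tr Q = 2n`, `tr Q² = n² + n + 6` and
`det Q = 4` with the eigenvalues shows that the remaining three are the roots of
`x³ - (n + 3) x² + 3n x - 4`. Since the eigenvalues sum to `2n` while `q₁ < n + 1`, also
`q₂ > 1`, so `q₁` and `q₂` are the two largest roots and `f = n + 3 - q₁ - q₂` is the smallest
one. The cubic is `-4` at `0` and positive at `2.5 / n`, which traps the smallest root in between.
-/

open Matrix Finset Unitary

namespace Matrix.IsHermitian

variable {𝕜 n : Type*} [RCLike 𝕜] [Fintype n] [DecidableEq n] {A : Matrix n n 𝕜}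

lemma trace_mul_self_eq_sum_sq_eigenvalues (hA : A.IsHermitian) :
    (A * A).trace = ∑ i, (hA.eigenvalues i : 𝕜) ^ 2 := by
  conv_lhs => rw [hA.spectral_theorem, ← map_mul, conjStarAlgAut_apply, trace_mul_cycle,
    coe_star_mul_self, one_mul, diagonal_mul_diagonal, trace_diagonal]
  simp [sq]

lemma rank_sub_smul_one_eq_card_eigenvalues_ne (hA : A.IsHermitian) (c : ℝ) :
    (A - (c : 𝕜) • 1).rank = #{i | hA.eigenvalues i ≠ c} := by
  have hconj : A - (c : 𝕜) • 1 = conjStarAlgAut 𝕜 _ hA.eigenvectorUnitary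
      (diagonal fun i => ((hA.eigenvalues i - c : ℝ) : 𝕜)) := by
    conv_lhs => rw [hA.spectral_theorem]
    rw [← map_one (conjStarAlgAut 𝕜 _ hA.eigenvectorUnitary), ← map_smul, ← map_sub,
      ← diagonal_one, ← diagonal_smul, diagonal_sub]
    congr! with i
    simp
  rw [hconj, conjStarAlgAut_apply, ← coe_star]
  simp [-isUnit_iff_ne_zero, -coe_star, rank_diagonal, sub_eq_zero, Fintype.card_subtype]

end Matrix.IsHermitian

lemma sum_comp_eq_sum_card_fiber_mul {ι κ R : Type*} [Fintype ι] [Fintype κ] [DecidableEq κ]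
    [CommSemiring R] (f : ι → κ) (g : κ → R) :
    ∑ i, g (f i) = ∑ k, (#{i | f i = k} : R) * g k := by
  simp [← sum_fiberwise' univ f g, sum_const]

namespace Matrix

variable {ι κ R : Type*} [CommRing R]

lemma trace_mul_mul_self_comm [Fintype ι] [Fintype κ] (A : Matrix ι κ R) (B : Matrix κ ι R) :
    (A * B * (A * B)).trace = (B * A * (B * A)).trace := by
  rw [Matrix.mul_assoc, trace_mul_comm]
  simp only [Matrix.mul_assoc]

lemma submatrix_eq_mul_mul_transpose [Fintype κ] [DecidableEq κ] (M : Matrix κ κ R)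
    (f : ι → κ) :
    M.submatrix f f =
      (1 : Matrix κ κ R).submatrix f id * M * ((1 : Matrix κ κ R).submatrix f id)ᵀ := by
  ext i j
  simp [mul_apply, one_apply]

lemma transpose_one_submatrix_mul_self [Fintype ι] [DecidableEq κ] (f : ι → κ) :
    ((1 : Matrix κ κ R).submatrix f id)ᵀ * (1 : Matrix κ κ R).submatrix f id =
      diagonal fun k => (#{i | f i = k} : R) := by
  ext k l
  simp only [mul_apply, transpose_apply, submatrix_apply, id, one_apply, diagonal_apply,
    ite_zero_mul_ite_zero, mul_one]
  split_ifs with h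
  · simp [h, sum_boole]
  · exact sum_eq_zero fun x _ => if_neg fun hx => h (hx.1.symm.trans hx.2)

section Submatrix

variable [Fintype ι] [Fintype κ] [DecidableEq κ] (M : Matrix κ κ R) (f : ι → κ)

lemma trace_submatrix_self :
    (M.submatrix f f).trace = ((diagonal fun k => (#{i | f i = k} : R)) * M).trace := by
  rw [submatrix_eq_mul_mul_transpose, trace_mul_comm, ← Matrix.mul_assoc _ _ M,
    transpose_one_submatrix_mul_self]

lemma trace_submatrix_self_mul_self :
    (M.submatrix f f * M.submatrix f f).trace =
      ((diagonal fun k => (#{i | f i = k} : R)) * M *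
        ((diagonal fun k => (#{i | f i = k} : R)) * M)).trace := by
  rw [submatrix_eq_mul_mul_transpose, trace_mul_mul_self_comm, ← Matrix.mul_assoc _ _ M,
    transpose_one_submatrix_mul_self]

lemma det_one_add_submatrix_self [DecidableEq ι] :
    (1 + M.submatrix f f).det = (1 + (diagonal fun k => (#{i | f i = k} : R)) * M).det := by
  rw [submatrix_eq_mul_mul_transpose, det_one_add_mul_comm, ← Matrix.mul_assoc _ _ M,
    transpose_one_submatrix_mul_self]

lemma rank_submatrix_self_le [StrongRankCondition R] :
    (M.submatrix f f).rank ≤ Fintype.card κ := by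
  rw [submatrix_eq_mul_mul_transpose, Matrix.mul_assoc]
  exact (rank_mul_le_left _ _).trans (rank_le_card_width _)

end Submatrix

end Matrix

section ThreeExceptional

variable {ι : Type*} [Fintype ι] [DecidableEq ι] {μ : ι → ℝ} {i j : ι}

lemma exists_eq_one_off_three (hcard : #{k | μ k ≠ 1} ≤ 3) (hι : 3 ≤ Fintype.card ι)
    (hij : i ≠ j) (hi : μ i ≠ 1) (hj : μ j ≠ 1) :
    ∃ k, k ≠ i ∧ k ≠ j ∧ ∀ l, l ≠ i → l ≠ j → l ≠ k → μ l = 1 := by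
  obtain ⟨t, hst, ht⟩ := exists_superset_card_eq hcard hι
  have hijt : {i, j} ⊆ t := by
    simp [insert_subset_iff, hst (mem_filter.2 ⟨mem_univ i, hi⟩),
      hst (mem_filter.2 ⟨mem_univ j, hj⟩)]
  obtain ⟨k, hk⟩ := card_eq_one.1 <| show #(t \ {i, j}) = 1 by
    rw [card_sdiff_of_subset hijt, ht, card_pair hij]
  have hkt : k ∈ t \ {i, j} := hk ▸ mem_singleton_self k
  simp only [mem_sdiff, mem_insert, mem_singleton, not_or] at hkt
  refine ⟨k, hkt.2.1, hkt.2.2, fun l hli hlj hlk => not_not.1 fun hl => hlk ?_⟩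
  rw [← mem_singleton, ← hk]
  simp [hst (mem_filter.2 ⟨mem_univ l, hl⟩), hli, hlj]

lemma power_sums_prod_of_eq_one_off_three {k : ι} (hij : i ≠ j) (hik : i ≠ k) (hjk : j ≠ k)
    (hone : ∀ l, l ≠ i → l ≠ j → l ≠ k → μ l = 1) :
    ∑ l, μ l = μ i + μ j + μ k + (Fintype.card ι - 3) ∧
      ∑ l, μ l ^ 2 = μ i ^ 2 + μ j ^ 2 + μ k ^ 2 + (Fintype.card ι - 3) ∧
      ∏ l, μ l = μ i * μ j * μ k := by
  set T : Finset ι := {i, j, k}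
  have hT : #T = 3 := by simp [T, hij, hik, hjk]
  have hTc : (#Tᶜ : ℝ) = Fintype.card ι - 3 := by
    rw [card_compl, Nat.cast_sub (hT ▸ card_le_univ T), hT, Nat.cast_ofNat]
  have hcompl (l : ι) (hl : l ∈ Tᶜ) : μ l = 1 := by
    simp only [T, mem_compl, mem_insert, mem_singleton, not_or] at hl
    exact hone l hl.1 hl.2.1 hl.2.2
  have hsum (g : ℝ → ℝ) :
      ∑ l, g (μ l) = g (μ i) + g (μ j) + g (μ k) + (Fintype.card ι - 3) * g 1 := by
    have hc : ∑ l ∈ Tᶜ, g (μ l) = ∑ l ∈ Tᶜ, g 1 := sum_congr rfl fun l hl => by rw [hcompl l hl]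
    rw [← sum_add_sum_compl T, hc, sum_const, nsmul_eq_mul, hTc]
    simp [T, hij, hik, hjk, add_assoc]
  refine ⟨by simpa using hsum id, by rw [hsum (· ^ 2)]; ring, ?_⟩
  rw [← prod_mul_prod_compl T, prod_congr rfl hcompl, prod_const_one, mul_one]
  simp [T, hij, hik, hjk, mul_assoc]

end ThreeExceptional

/-- `a, b, c` are the roots of `x³ - (n + 3) x² + 3n x - 4`, whose value at `2.5 / n` is
`(3.5 n³ - 6.25 n² - 18.75 n + 15.625) / n³ > 0`. -/
lemma cubic_smallest_root_bounds {n a b c : ℝ} (hn : 7 ≤ n) (hcb : c ≤ b) (hba : b ≤ a)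
    (hb : 0 < b) (h1 : a + b + c = n + 3) (h2 : a ^ 2 + b ^ 2 + c ^ 2 = n ^ 2 + 9)
    (h3 : a * b * c = 4) :
    0 < c ∧ c < 2.5 / n := by
  have he2 : a * b + b * c + c * a = 3 * n := by
    linear_combination (a + b + c + n + 3) / 2 * h1 - h2 / 2
  refine ⟨pos_of_mul_pos_right (h3 ▸ four_pos) (mul_pos (hb.trans_le hba) hb).le, ?_⟩
  rw [lt_div_iff₀ (by linarith), mul_comm]
  by_contra! hc
  have hexpand : (n * a - 2.5) * (n * b - 2.5) * (n * c - 2.5) =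
      -3.5 * n ^ 3 + 6.25 * n ^ 2 + 18.75 * n - 15.625 := by
    linear_combination n ^ 3 * h3 - 2.5 * n ^ 2 * he2 + 6.25 * n * h1
  have hnb : 2.5 ≤ n * b := hc.trans (by nlinarith)
  have hna : 2.5 ≤ n * a := hnb.trans (by nlinarith)
  have : 0 ≤ (n * a - 2.5) * (n * b - 2.5) * (n * c - 2.5) := by
    apply mul_nonneg (mul_nonneg _ _) <;> linarith
  nlinarith

namespace StarPlus

variable {n : ℕ}

def vertexClass (n : ℕ) (i : Fin n) : Fin 3 :=
  if i.val < 2 then 0 else if i.val = 2 then 1 else 2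

def quotientAdj : Matrix (Fin 3) (Fin 3) ℝ := !![1, 1, 0; 1, 0, 1; 0, 1, 0]

def quotientQ (n : ℕ) : Matrix (Fin 3) (Fin 3) ℝ := !![1, 1, 0; 1, n - 2, 1; 0, 1, 0]

lemma vertexClass_eq_zero_iff (i : Fin n) : vertexClass n i = 0 ↔ i.val < 2 := by
  unfold vertexClass; split_ifs <;> simp_all

lemma vertexClass_eq_one_iff (i : Fin n) : vertexClass n i = 1 ↔ i.val = 2 := by
  unfold vertexClass; split_ifs <;> simp_all; omega

lemma card_vertexClass (hn : 3 ≤ n) (k : Fin 3) :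
    (#{i | vertexClass n i = k} : ℝ) = ![2, 1, (n : ℝ) - 3] k := by
  have h0 : #{i | vertexClass n i = 0} = 2 := by
    simp only [vertexClass_eq_zero_iff, Fin.card_filter_val_lt]
    omega
  have h1 : #{i | vertexClass n i = 1} = 1 := card_eq_one.2 ⟨⟨2, hn⟩, by
    ext; simp [vertexClass_eq_one_iff, Fin.ext_iff (b := (⟨2, hn⟩ : Fin n))]⟩
  have h2 : #{i | vertexClass n i = 2} = n - 3 := by
    have htotal := card_eq_sum_card_fiberwise (s := univ) (t := univ) (f := vertexClass n)
      fun _ _ => mem_univ _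
    rw [card_univ, Fintype.card_fin, Fin.sum_univ_three, h0, h1] at htotal
    omega
  fin_cases k <;> simp [h0, h1, h2, hn]

lemma starPlusA_apply (i j : Fin n) : starPlusA n i j =
    if i = j then 0 else quotientAdj (vertexClass n i) (vertexClass n j) := by
  simp only [starPlusA, starPlusAdj, of_apply, vertexClass, quotientAdj, ne_eq, Fin.ext_iff]
  split_ifs <;> simp_all <;> omega

lemma sum_starPlusA (hn : 3 ≤ n) (i : Fin n) :
    ∑ j, starPlusA n i j = ![2, (n : ℝ) - 1, 1] (vertexClass n i) := by
  have hdiag (j : Fin n) : starPlusA n i j = quotientAdj (vertexClass n i) (vertexClass n j) -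
      if i = j then quotientAdj (vertexClass n i) (vertexClass n i) else 0 := by
    rw [starPlusA_apply]; split_ifs with h <;> simp [h]
  simp only [hdiag, sum_sub_distrib, sum_ite_eq, mem_univ, if_true,
    sum_comp_eq_sum_card_fiber_mul (vertexClass n) (quotientAdj (vertexClass n i)),
    card_vertexClass hn, Fin.sum_univ_three]
  generalize vertexClass n i = k
  fin_cases k <;> simp [quotientAdj]; ring

lemma starPlusQ_eq (hn : 3 ≤ n) :
    starPlusQ n = 1 + (quotientQ n).submatrix (vertexClass n) (vertexClass n) := by
  ext i j
  rw [starPlusQ, Matrix.add_apply, diagonal_apply, sum_starPlusA hn, starPlusA_apply,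
    Matrix.add_apply, one_apply, submatrix_apply]
  simp only [vertexClass, quotientQ, quotientAdj, Fin.ext_iff]
  split_ifs <;> simp_all <;> ring

lemma trace_starPlusQ (hn : 3 ≤ n) : (starPlusQ n).trace = 2 * n := by
  rw [starPlusQ_eq hn, trace_add, trace_one, trace_submatrix_self]
  simp [card_vertexClass hn, trace_fin_three, quotientQ]
  ring

lemma trace_starPlusQ_mul_self (hn : 3 ≤ n) :
    (starPlusQ n * starPlusQ n).trace = (n : ℝ) ^ 2 + n + 6 := by
  rw [starPlusQ_eq hn, add_mul, mul_add, mul_add, trace_add, trace_add, trace_add, one_mul,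
    mul_one, Matrix.one_mul, trace_one, trace_submatrix_self, trace_submatrix_self_mul_self]
  simp [card_vertexClass hn, trace_fin_three, quotientQ, mul_apply, Fin.sum_univ_three]
  ring

lemma det_starPlusQ (hn : 3 ≤ n) : (starPlusQ n).det = 4 := by
  rw [starPlusQ_eq hn, det_one_add_submatrix_self]
  simp [card_vertexClass hn, det_fin_three, quotientQ, one_apply]
  ring

lemma rank_starPlusQ_sub_one_le (hn : 3 ≤ n) : (starPlusQ n - (1 : ℝ) • 1).rank ≤ 3 := by
  rw [one_smul, starPlusQ_eq hn, add_sub_cancel_left]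
  exact rank_submatrix_self_le _ _

section Eigenvalues

variable (hQ : (starPlusQ n).IsHermitian)

lemma sum_eigenvalues (hn : 3 ≤ n) : ∑ k, hQ.eigenvalues k = 2 * n := by
  simpa [trace_starPlusQ hn] using hQ.trace_eq_sum_eigenvalues.symm

lemma sum_sq_eigenvalues (hn : 3 ≤ n) : ∑ k, hQ.eigenvalues k ^ 2 = (n : ℝ) ^ 2 + n + 6 := by
  simpa [trace_starPlusQ_mul_self hn] using hQ.trace_mul_self_eq_sum_sq_eigenvalues.symm

lemma prod_eigenvalues (hn : 3 ≤ n) : ∏ k, hQ.eigenvalues k = 4 := by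
  simpa [det_starPlusQ hn] using hQ.det_eq_prod_eigenvalues.symm

lemma card_eigenvalues_ne_one_le (hn : 3 ≤ n) : #{k | hQ.eigenvalues k ≠ 1} ≤ 3 := by
  rw [← hQ.rank_sub_smul_one_eq_card_eigenvalues_ne]
  simpa using rank_starPlusQ_sub_one_le hn

lemma one_lt_eigenvalue (hn : 7 ≤ n) {i j : Fin n}
    (hj : ∀ k, k ≠ i → hQ.eigenvalues k ≤ hQ.eigenvalues j) : 1 < hQ.eigenvalues j := by
  have hn' : (7 : ℝ) ≤ n := by exact_mod_cast hn
  have hi : hQ.eigenvalues i < n + 1 := by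
    have := single_le_sum (fun k _ => sq_nonneg (hQ.eigenvalues k)) (mem_univ i)
    rw [sum_sq_eigenvalues hQ (by omega)] at this
    nlinarith
  have hrest : ∑ k ∈ univ.erase i, hQ.eigenvalues k ≤ (n - 1) * hQ.eigenvalues j := by
    calc ∑ k ∈ univ.erase i, hQ.eigenvalues k ≤ ∑ k ∈ univ.erase i, hQ.eigenvalues j :=
          sum_le_sum fun k hk => hj k (ne_of_mem_erase hk)
      _ = (n - 1) * hQ.eigenvalues j := by
          simp [card_erase_of_mem, Nat.cast_sub (show 1 ≤ n by omega)]
  have htotal := add_sum_erase univ hQ.eigenvalues (mem_univ i)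
  rw [sum_eigenvalues hQ (by omega)] at htotal
  nlinarith

end Eigenvalues

end StarPlus

open StarPlus

/-- `f(G) = e(G) + 3 − (q₁ + q₂)`; for `S_n⁺` we have `e(G) = n`. -/
theorem stmt_16 (n : ℕ) (hn : 7 ≤ n)
    (hQ : (starPlusQ n).IsHermitian) (q1 q2 : ℝ) (i j : Fin n) (hij : i ≠ j)
    (hq1 : hQ.eigenvalues i = q1) (hq2 : hQ.eigenvalues j = q2)
    (hmax1 : ∀ k, hQ.eigenvalues k ≤ q1)
    (hmax2 : ∀ k, k ≠ i → hQ.eigenvalues k ≤ q2) :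
    0 < (n : ℝ) + 3 - (q1 + q2) ∧ (n : ℝ) + 3 - (q1 + q2) < 2.5 / n := by
  subst hq1 hq2
  have hn3 : 3 ≤ n := by omega
  have hj : 1 < hQ.eigenvalues j := one_lt_eigenvalue hQ hn hmax2
  have hi : 1 < hQ.eigenvalues i := hj.trans_le (hmax1 j)
  obtain ⟨k, hki, hkj, hone⟩ := exists_eq_one_off_three
    (card_eigenvalues_ne_one_le hQ hn3) (by simpa using hn3) hij hi.ne' hj.ne'
  obtain ⟨h1, h2, h3⟩ := power_sums_prod_of_eq_one_off_three hij hki.symm hkj.symm hone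
  rw [sum_eigenvalues hQ hn3, Fintype.card_fin] at h1
  rw [sum_sq_eigenvalues hQ hn3, Fintype.card_fin] at h2
  rw [prod_eigenvalues hQ hn3] at h3
  have hf : (n : ℝ) + 3 - (hQ.eigenvalues i + hQ.eigenvalues j) = hQ.eigenvalues k := by linarith
  rw [hf]
  exact cubic_smallest_root_bounds (by exact_mod_cast hn) (hmax2 k hki) (hmax1 j) (by linarith)
    (by linarith) (by linarith) h3.symm
end
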